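/- arXiv:math/0610944 — 4 statements merged into one kernel-verified Lean document; each statement's English description precedes it below -/
import Mathlib

section
/- Let G := ℚ_p × (ℚ_p/ℤ_p), q : ℚ_p → ℚ_p/ℤ_p the quotient map, and β(x,y) := (p⁻¹x, y + q(p⁻¹x)). For x = Σ_{k≥0} a_k p^k ∈ ℤ_p with digits a_k ∈ {0,…,p-1}, and each n ∈ ℕ, one has β^n(x,0) = (p^{-n} x, Σ_{k=1}^{n} (Σ_{j=0}^{n-k} a_j) p^{-k} + ℤ_p). -/
/-!
Induction gives `β^n(x, 0) = (p^{-n} x, Σ_{m=1}^{n} q(p^{-m} x))`. Modulo `ℤ_p`, `p^{-m} x` agrees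
with `p^{-m} x_m` for the truncation `x_m = Σ_{j<m} a_j p^j`, and regrouping the double sum
`Σ_{m=1}^{n} p^{-m} x_m = Σ_{k ≥ 1, j + k ≤ n} a_j p^{-k}` by the exponent `k` gives the formula.
-/

/-- The ring of `p`-adic integers viewed as an additive subgroup of `ℚ_[p]`. -/
noncomputable def padicIntSubgroup (p : ℕ) [Fact p.Prime] : AddSubgroup ℚ_[p] where
  carrier := {x : ℚ_[p] | ‖x‖ ≤ 1}
  zero_mem' := by simp
  add_mem' := fun {a b} ha hb =>
    le_trans (Padic.nonarchimedean a b) (max_le ha hb)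
  neg_mem' := fun {a} ha => by simpa using ha

open Finset

theorem iterate_skew_apply_zero {R A : Type*} [Semiring R] [AddCommMonoid A] (q : R →+ A)
    (c x : R) (β : R × A → R × A) (hβ : ∀ z, β z = (c * z.1, z.2 + q (c * z.1))) (n : ℕ) :
    β^[n] (x, 0) = (c ^ n * x, q (∑ i ∈ range n, c ^ (i + 1) * x)) := by
  induction n with
  | zero => simp
  | succ n ih =>
    rw [Function.iterate_succ_apply', ih, hβ, sum_range_succ, map_add, ← mul_assoc, ← pow_succ']

theorem sum_Icc_sum_range_mul_pow_eq {R : Type*} [CommSemiring R] {u c : R} (huc : u * c = 1)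
    (b : ℕ → R) (n : ℕ) :
    ∑ k ∈ Icc 1 n, (∑ j ∈ range (n - k + 1), b j) * u ^ k =
      ∑ i ∈ range n, u ^ (i + 1) * ∑ j ∈ range (i + 1), b j * c ^ j := by
  have hshift : ∑ k ∈ Icc 1 n, (∑ j ∈ range (n - k + 1), b j) * u ^ k =
      ∑ i ∈ range n, ∑ j ∈ range (n - i), b j * u ^ (i + 1) := by
    rw [← Ico_add_one_right_eq_Icc, sum_Ico_eq_sum_range, Nat.add_sub_cancel]
    refine sum_congr rfl fun i hi => ?_
    rw [sum_mul, add_comm 1 i, Nat.sub_add_eq,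
      Nat.sub_add_cancel (Nat.sub_pos_of_lt (mem_range.mp hi))]
  rw [hshift, ← sum_range_diag_flip n (fun i j => b j * u ^ (i + 1))]
  refine sum_congr rfl fun i _ => ?_
  rw [mul_sum, ← sum_range_reflect]
  refine sum_congr rfl fun j hj => ?_
  have hji : j ≤ i := Nat.lt_succ_iff.mp (mem_range.mp hj)
  obtain ⟨d, rfl⟩ := Nat.exists_eq_add_of_le hji
  rw [show j + d + 1 - 1 - j = d by omega, Nat.add_sub_cancel]
  calc b j * u ^ (d + 1) = b j * u ^ (d + 1) * (u * c) ^ j := by rw [huc, one_pow, mul_one]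
    _ = u ^ (j + d + 1) * (b j * c ^ j) := by ring

theorem norm_inv_pow_mul_tsum_sub_sum_le_one (p : ℕ) [Fact p.Prime] (b : ℕ → ℚ_[p])
    (hb : ∀ k, ‖b k‖ ≤ 1) (m : ℕ) :
    ‖(p : ℚ_[p])⁻¹ ^ m * (∑' k, b k * p ^ k - ∑ j ∈ range m, b j * p ^ j)‖ ≤ 1 := by
  have hterm : ∀ j k, ‖b j * (p : ℚ_[p]) ^ k‖ ≤ (p : ℝ)⁻¹ ^ k := fun j k => by
    rw [norm_mul, norm_pow, Padic.norm_p]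
    exact mul_le_of_le_one_left (by positivity) (hb j)
  have hsum : Summable fun k => b k * (p : ℚ_[p]) ^ k :=
    .of_norm_bounded (summable_geometric_of_lt_one (r := (p : ℝ)⁻¹) (by positivity)
      (inv_lt_one_of_one_lt₀ (by exact_mod_cast (Fact.out : p.Prime).one_lt))) fun k => hterm k k
  have hp : (p : ℚ_[p]) ≠ 0 := by exact_mod_cast (Fact.out : p.Prime).ne_zero
  rw [← hsum.sum_add_tsum_nat_add m, add_sub_cancel_left, ← tsum_mul_left]
  refine IsUltrametricDist.norm_tsum_le_of_forall_le_of_nonneg zero_le_one fun k => ?_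
  rw [show (p : ℚ_[p])⁻¹ ^ m * (b (k + m) * p ^ (k + m)) = b (k + m) * p ^ k by
    rw [pow_add, inv_pow]; field_simp]
  exact (hterm _ _).trans (pow_le_one₀ (by positivity)
    (inv_le_one_of_one_le₀ (by exact_mod_cast (Fact.out : p.Prime).one_le)))

theorem stmt8_general (p : ℕ) [Fact p.Prime]
    (q : ℚ_[p] →+ ℚ_[p] ⧸ padicIntSubgroup p)
    (hq : q = QuotientAddGroup.mk' (padicIntSubgroup p))
    (β : ℚ_[p] × (ℚ_[p] ⧸ padicIntSubgroup p) → ℚ_[p] × (ℚ_[p] ⧸ padicIntSubgroup p))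
    (hβ : ∀ z, β z = ((p : ℚ_[p])⁻¹ * z.1, z.2 + q ((p : ℚ_[p])⁻¹ * z.1)))
    (a : ℕ → ℕ)
    (x : ℚ_[p]) (hx : x = ∑' k : ℕ, (a k : ℚ_[p]) * (p : ℚ_[p]) ^ k) :
    ∀ n : ℕ, β^[n] (x, 0) =
      ((p : ℚ_[p]) ^ (-(n : ℤ)) * x,
        q (∑ k ∈ Finset.Icc 1 n,
            (∑ j ∈ Finset.range (n - k + 1), (a j : ℚ_[p])) *
              (p : ℚ_[p]) ^ (-(k : ℤ)))) := by
  intro n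
  subst hq hx
  have hp : (p : ℚ_[p]) ≠ 0 := by exact_mod_cast (Fact.out : p.Prime).ne_zero
  have hzpow (k : ℕ) : (p : ℚ_[p]) ^ (-(k : ℤ)) = (p : ℚ_[p])⁻¹ ^ k := by
    rw [zpow_neg, zpow_natCast, inv_pow]
  simp only [iterate_skew_apply_zero _ _ _ β hβ, hzpow,
    sum_Icc_sum_range_mul_pow_eq (inv_mul_cancel₀ hp)]
  refine Prod.ext rfl (QuotientAddGroup.eq_iff_sub_mem.mpr ?_)
  rw [← sum_sub_distrib]
  refine sum_mem fun i _ => ?_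
  rw [← mul_sub]
  exact norm_inv_pow_mul_tsum_sub_sum_le_one p _
    (fun k => IsUltrametricDist.norm_natCast_le_one ℚ_[p] (a k)) (i + 1)

/-- Let `G := ℚ_p × (ℚ_p/ℤ_p)`, `q : ℚ_p → ℚ_p/ℤ_p` the quotient
map, and `β(x,y) := (p⁻¹x, y + q(p⁻¹x))`. For `x = Σ_{k≥0} a_k p^k ∈ ℤ_p` with
digits `a_k ∈ {0,…,p-1}` and each `n ∈ ℕ`,
`β^n(x,0) = (p^{-n} x, Σ_{k=1}^{n} (Σ_{j=0}^{n-k} a_j) p^{-k} + ℤ_p)`. -/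
theorem stmt8 (p : ℕ) [Fact p.Prime]
    (q : ℚ_[p] →+ ℚ_[p] ⧸ padicIntSubgroup p)
    (hq : q = QuotientAddGroup.mk' (padicIntSubgroup p))
    (β : ℚ_[p] × (ℚ_[p] ⧸ padicIntSubgroup p) → ℚ_[p] × (ℚ_[p] ⧸ padicIntSubgroup p))
    (hβ : ∀ z, β z = ((p : ℚ_[p])⁻¹ * z.1, z.2 + q ((p : ℚ_[p])⁻¹ * z.1)))
    (a : ℕ → ℕ) (ha : ∀ k, a k < p)
    (x : ℚ_[p]) (hx : x = ∑' k : ℕ, (a k : ℚ_[p]) * (p : ℚ_[p]) ^ k) :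
    ∀ n : ℕ, β^[n] (x, 0) =
      ((p : ℚ_[p]) ^ (-(n : ℤ)) * x,
        q (∑ k ∈ Finset.Icc 1 n,
            (∑ j ∈ Finset.range (n - k + 1), (a j : ℚ_[p])) *
              (p : ℚ_[p]) ^ (-(k : ℤ)))) :=
  stmt8_general p q hq β hβ a x hx
end

section
/- Let G := ℚ_p × (ℚ_p/ℤ_p), β(x,y) := (p⁻¹x, y + q(p⁻¹x)) and α(x,y) := (p⁻¹x, y). Then for every n ∈ ℕ, α^n(ℤ_p × {0}) ∩ β^n(ℤ_p × {0}) = ℤ_p × {0}. -/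
open Finset

theorem iterate_mul_fst_add_map_apply {R M : Type*} [CommSemiring R] [AddCommMonoid M] (a : R)
    (f : R →+ M) (β : R × M → R × M) (hβ : ∀ z, β z = (a * z.1, z.2 + f (a * z.1)))
    (n : ℕ) (z : R × M) :
    β^[n] z = (a ^ n * z.1, z.2 + f ((∑ k ∈ range n, a ^ k) * a * z.1)) := by
  induction n with
  | zero => simp
  | succ n ih =>
    rw [Function.iterate_succ_apply', ih, hβ, add_assoc, ← map_add, sum_range_succ]
    refine Prod.ext ?_ ?_
    · dsimp only; ring
    · dsimp only; congr 2; ring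

theorem iterate_mul_fst_apply {R M : Type*} [Monoid R] (a : R) (α : R × M → R × M)
    (hα : ∀ z, α z = (a * z.1, z.2)) (n : ℕ) (z : R × M) :
    α^[n] z = (a ^ n * z.1, z.2) := by
  have : α = Prod.map (a * ·) id := funext hα
  simp only [this, Prod.map_iterate, mul_left_iterate, Function.iterate_id]
  rfl

theorem Padic.norm_natCast_sub_one (p : ℕ) [Fact p.Prime] : ‖(p : ℚ_[p]) - 1‖ = 1 := by
  have h : ‖(p : ℚ_[p])‖ ≠ ‖(-1 : ℚ_[p])‖ := by
    rw [norm_neg, norm_one]; exact Padic.norm_p_lt_one.ne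
  rw [sub_eq_add_neg, Padic.add_eq_max_of_ne h, norm_neg, norm_one,
    max_eq_right Padic.norm_p_lt_one.le]

namespace padicIntSubgroup

variable {p : ℕ} [Fact p.Prime]

theorem mem_iff {x : ℚ_[p]} : x ∈ padicIntSubgroup p ↔ ‖x‖ ≤ 1 := Iff.rfl

theorem natCast_pow_mul_mem {x : ℚ_[p]} (hx : x ∈ padicIntSubgroup p) (n : ℕ) :
    (p : ℚ_[p]) ^ n * x ∈ padicIntSubgroup p := by
  rw [mem_iff, norm_mul, norm_pow]
  exact mul_le_one₀ (pow_le_one₀ (norm_nonneg _) Padic.norm_p_lt_one.le) (norm_nonneg _) hx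

theorem geom_sum_inv_mul_mem_iff (n : ℕ) {x : ℚ_[p]} (hx : x ∈ padicIntSubgroup p) :
    (∑ k ∈ range n, (p : ℚ_[p])⁻¹ ^ k) * (p : ℚ_[p])⁻¹ * x ∈ padicIntSubgroup p ↔
      (p : ℚ_[p])⁻¹ ^ n * x ∈ padicIntSubgroup p := by
  have hp : (p : ℚ_[p]) ≠ 0 := Nat.cast_ne_zero.mpr (Fact.out : p.Prime).ne_zero
  have hsum : (∑ k ∈ range n, (p : ℚ_[p])⁻¹ ^ k) * (p : ℚ_[p])⁻¹ * x * ((p : ℚ_[p]) - 1) =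
      x - (p : ℚ_[p])⁻¹ ^ n * x := by
    linear_combination x * geom_sum_mul_neg (p : ℚ_[p])⁻¹ n +
      (∑ k ∈ range n, (p : ℚ_[p])⁻¹ ^ k) * x * inv_mul_cancel₀ hp
  have hnorm := congrArg norm hsum
  rw [norm_mul _ ((p : ℚ_[p]) - 1), Padic.norm_natCast_sub_one, mul_one] at hnorm
  rw [mem_iff, hnorm, ← mem_iff, sub_eq_add_neg, add_mem_cancel_left hx, neg_mem_iff]

end padicIntSubgroup

/-- Let `G := ℚ_p × (ℚ_p/ℤ_p)`, `β(x,y) := (p⁻¹x, y + q(p⁻¹x))`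
and `α(x,y) := (p⁻¹x, y)`. Then for every `n ∈ ℕ`,
`α^n(ℤ_p × {0}) ∩ β^n(ℤ_p × {0}) = ℤ_p × {0}`. -/
theorem stmt9 (p : ℕ) [Fact p.Prime]
    (q : ℚ_[p] →+ ℚ_[p] ⧸ padicIntSubgroup p)
    (hq : q = QuotientAddGroup.mk' (padicIntSubgroup p))
    (α β : ℚ_[p] × (ℚ_[p] ⧸ padicIntSubgroup p) → ℚ_[p] × (ℚ_[p] ⧸ padicIntSubgroup p))
    (hα : ∀ z, α z = ((p : ℚ_[p])⁻¹ * z.1, z.2))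
    (hβ : ∀ z, β z = ((p : ℚ_[p])⁻¹ * z.1, z.2 + q ((p : ℚ_[p])⁻¹ * z.1))) :
    ∀ n : ℕ,
      α^[n] '' ((padicIntSubgroup p : Set ℚ_[p]) ×ˢ ({0} : Set (ℚ_[p] ⧸ padicIntSubgroup p))) ∩
        β^[n] '' ((padicIntSubgroup p : Set ℚ_[p]) ×ˢ ({0} : Set (ℚ_[p] ⧸ padicIntSubgroup p))) =
      (padicIntSubgroup p : Set ℚ_[p]) ×ˢ ({0} : Set (ℚ_[p] ⧸ padicIntSubgroup p)) := by
  intro n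
  have hp : (p : ℚ_[p]) ≠ 0 := Nat.cast_ne_zero.mpr (Fact.out : p.Prime).ne_zero
  have hq_eq_zero (x : ℚ_[p]) : q x = 0 ↔ x ∈ padicIntSubgroup p := by
    rw [hq]; exact QuotientAddGroup.eq_zero_iff x
  ext ⟨u, v⟩
  constructor
  · rintro ⟨⟨⟨x, _⟩, ⟨hx, rfl⟩, hαx⟩, ⟨⟨x', _⟩, ⟨-, rfl⟩, hβx'⟩⟩
    rw [iterate_mul_fst_apply _ α hα, Prod.mk.injEq] at hαx
    rw [iterate_mul_fst_add_map_apply _ q β hβ, Prod.mk.injEq, zero_add] at hβx'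
    obtain ⟨rfl, rfl⟩ := hαx
    obtain ⟨hx'x, hqx'⟩ := hβx'
    obtain rfl : x' = x := mul_left_cancel₀ (pow_ne_zero n (inv_ne_zero hp)) hx'x
    exact ⟨(padicIntSubgroup.geom_sum_inv_mul_mem_iff n hx).1 ((hq_eq_zero _).1 hqx'), rfl⟩
  · rintro ⟨hu, rfl : v = 0⟩
    have hx := padicIntSubgroup.natCast_pow_mul_mem hu n
    have hux : (p : ℚ_[p])⁻¹ ^ n * ((p : ℚ_[p]) ^ n * u) = u := by
      rw [inv_pow, inv_mul_cancel_left₀ (pow_ne_zero n hp)]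
    have hqx :=
      (hq_eq_zero _).2 ((padicIntSubgroup.geom_sum_inv_mul_mem_iff n hx).2 (by rwa [hux]))
    refine ⟨⟨(_, 0), ⟨hx, rfl⟩, ?_⟩, ⟨(_, 0), ⟨hx, rfl⟩, ?_⟩⟩
    · rw [iterate_mul_fst_apply _ α hα, hux]
    · rw [iterate_mul_fst_add_map_apply _ q β hβ, hux, zero_add, hqx]
end

section
/- Let K := F((X)), O := F[[X]], and define β : K → K by β(z) := X⁻¹z⁽⁴⁾ + X⁻²z⁽⁵⁾ + z⁽⁶⁾, where z⁽⁴⁾ := Σ_{k≥0} a_k X^k, z⁽⁵⁾ := Σ_{k≥0} a_{-(2k+1)} X^{-(2k+1)}, z⁽⁶⁾ := Σ_{k≥1} a_{-2k} X^{-2k}. Then β is an additive automorphism of K, β restricted to O agrees with multiplication by X⁻¹, and for each n ∈ ℕ, β^n(O) = Σ_{k=0}^{n-1} F·X^{-(2k+1)} + O. -/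
open scoped Classical

noncomputable section

variable (F : Type*) [Field F]

/-- The part of a Laurent series supported on `{k | P k}`. -/
def lpart (P : ℤ → Prop) (z : LaurentSeries F) : LaurentSeries F :=
  { coeff := fun k => if P k then z.coeff k else 0,
    isPWO_support' := z.isPWO_support'.mono (fun k hk => by
      by_cases h : P k <;> simp_all [Function.mem_support]) }

variable {F}

lemma lpart_add (P : ℤ → Prop) (a b : LaurentSeries F) :
    lpart F P (a + b) = lpart F P a + lpart F P b := by
  ext k
  simp only [lpart, HahnSeries.coeff_add]
  split <;> simp

variable (F)

/-- The variable `X` of the Laurent series field `K = F((X))`. -/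
def lX : LaurentSeries F := HahnSeries.single 1 1

/-- The ring of formal power series `O = F[[X]]` as an additive subgroup of
`K = F((X))`. -/
def lO : AddSubgroup (LaurentSeries F) where
  carrier := {z | ∀ k < 0, z.coeff k = 0}
  zero_mem' := by intro k _; simp
  add_mem' := by intro a b ha hb k hk; simp [ha k hk, hb k hk]
  neg_mem' := by intro a ha k hk; simp [ha k hk]


/-- `z⁽⁴⁾ := Σ_{k≥0} a_k X^k`, the part of degree `≥ 0`. -/
def part4 (z : LaurentSeries F) : LaurentSeries F := lpart F (fun k => 0 ≤ k) z

/-- `z⁽⁵⁾ := Σ_{k≥0} a_{-(2k+1)} X^{-(2k+1)}`, the negative odd-degree part. -/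
def part5 (z : LaurentSeries F) : LaurentSeries F :=
  lpart F (fun k => k < 0 ∧ Odd k) z

/-- `z⁽⁶⁾ := Σ_{k≥1} a_{-2k} X^{-2k}`, the negative even-degree part. -/
def part6 (z : LaurentSeries F) : LaurentSeries F :=
  lpart F (fun k => k < 0 ∧ Even k) z

/-- The additive endomorphism `β(z) := X⁻¹z⁽⁴⁾ + X⁻²z⁽⁵⁾ + z⁽⁶⁾` of `K`. -/
def betaK : AddMonoid.End (LaurentSeries F) :=
  AddMonoidHom.mk'
    (fun z => (lX F)⁻¹ * part4 F z + ((lX F)⁻¹) ^ 2 * part5 F z + part6 F z)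
    (by
      intro a b
      simp only [part4, part5, part6, lpart_add, mul_add]
      ring)

/-- The one-dimensional subspace `F·X^{-m}` of `K = F((X))`, as an additive
subgroup. -/
def Fline (m : ℕ) : AddSubgroup (LaurentSeries F) :=
  (AddMonoidHom.mk' (fun c : F => HahnSeries.C c * ((lX F)⁻¹) ^ m)
    (by intro a b; simp only [map_add, add_mul])).range

/-!
`β` only permutes coefficients: `(β z)_k = z_(π k)` for the bijection `π = betaIndex` of `ℤ`
that is `k ↦ k + 1` on `k ≥ -1`, `k ↦ k + 2` on odd `k ≤ -3` and the identity on even `k ≤ -2`.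
The series with coefficients `w ∘ π⁻¹` is again a sum of `X`-shifts of parts of `w`, so `β` is
bijective. On `O` only `z⁽⁴⁾` survives, so `β = X⁻¹ ·` there and `β(O) = F·X⁻¹ + O`; moreover
`β(c X^{-(2m+1)}) = c X^{-(2m+3)}`, whence
`β^{n+1}(O) = β^n(F·X⁻¹) + β^n(O) = F·X^{-(2n+1)} + β^n(O)`.
-/

variable {F}

lemma AddSubgroup.mem_map_end {A : Type*} [AddGroup A] {f : AddMonoid.End A}
    {H : AddSubgroup A} {y : A} : y ∈ H.map f ↔ ∃ x ∈ H, f x = y :=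
  Iff.rfl

lemma AddSubgroup.map_one_end {A : Type*} [AddGroup A] (H : AddSubgroup A) :
    H.map (1 : AddMonoid.End A) = H :=
  H.map_id

lemma AddSubgroup.map_mul_end {A : Type*} [AddGroup A] (f g : AddMonoid.End A)
    (H : AddSubgroup A) : H.map (f * g) = (H.map g).map f :=
  (H.map_map _ _).symm

lemma coeff_lpart (P : ℤ → Prop) (z : LaurentSeries F) (k : ℤ) :
    (lpart F P z).coeff k = if P k then z.coeff k else 0 :=
  rfl

lemma lpart_eq_self {P : ℤ → Prop} {z : LaurentSeries F} (h : ∀ k, z.coeff k ≠ 0 → P k) :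
    lpart F P z = z := by
  ext k
  rw [coeff_lpart, ite_eq_left_iff]
  exact fun hk => (not_imp_comm.mp (h k) hk).symm

lemma lpart_eq_zero {P : ℤ → Prop} {z : LaurentSeries F} (h : ∀ k, P k → z.coeff k = 0) :
    lpart F P z = 0 := by
  ext k
  rw [coeff_lpart, HahnSeries.coeff_zero, ite_eq_right_iff]
  exact h k

lemma lX_inv : (lX F)⁻¹ = HahnSeries.single (-1) 1 := by
  rw [lX, HahnSeries.inv_single, inv_one]

lemma lX_inv_pow (m : ℕ) : (lX F)⁻¹ ^ m = HahnSeries.single (-(m : ℤ)) 1 := by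
  rw [lX_inv, HahnSeries.single_pow, one_pow, smul_neg, nsmul_one]

lemma coeff_lX_mul (z : LaurentSeries F) (k : ℤ) : (lX F * z).coeff k = z.coeff (k - 1) := by
  rw [lX, HahnSeries.coeff_single_mul, one_mul]

lemma coeff_lX_pow_mul (m : ℕ) (z : LaurentSeries F) (k : ℤ) :
    (lX F ^ m * z).coeff k = z.coeff (k - m) := by
  rw [lX, HahnSeries.single_pow, one_pow, nsmul_one, HahnSeries.coeff_single_mul, one_mul]

lemma coeff_lX_inv_mul (z : LaurentSeries F) (k : ℤ) :
    ((lX F)⁻¹ * z).coeff k = z.coeff (k + 1) := by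
  rw [lX_inv, HahnSeries.coeff_single_mul, one_mul, sub_neg_eq_add]

lemma coeff_lX_inv_pow_mul (m : ℕ) (z : LaurentSeries F) (k : ℤ) :
    ((lX F)⁻¹ ^ m * z).coeff k = z.coeff (k + m) := by
  rw [lX_inv_pow, HahnSeries.coeff_single_mul, one_mul, sub_neg_eq_add]

lemma single_mem_lO {k : ℤ} (hk : 0 ≤ k) (c : F) : HahnSeries.single k c ∈ lO F :=
  fun _ hj => HahnSeries.coeff_single_of_ne (by omega)

lemma lX_mul_mem_lO {z : LaurentSeries F} (hz : z ∈ lO F) : lX F * z ∈ lO F := fun k hk => by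
  rw [coeff_lX_mul]
  exact hz _ (by omega)

lemma mem_Fline {m : ℕ} {z : LaurentSeries F} :
    z ∈ Fline F m ↔ ∃ c : F, HahnSeries.single (-(m : ℤ)) c = z := by
  simp only [Fline, AddMonoidHom.mem_range, AddMonoidHom.mk'_apply, lX_inv_pow,
    HahnSeries.C_apply, HahnSeries.single_mul_single, zero_add, mul_one]

def betaIndex : ℤ ≃ ℤ where
  toFun k := if -1 ≤ k then k + 1 else if Odd k then k + 2 else k
  invFun k := if 0 ≤ k then k - 1 else if Odd k then k - 2 else k
  left_inv k := by simp only [Int.odd_iff]; split_ifs <;> omega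
  right_inv k := by simp only [Int.odd_iff]; split_ifs <;> omega

lemma coeff_betaK (z : LaurentSeries F) (k : ℤ) :
    (betaK F z).coeff k = z.coeff (betaIndex k) := by
  change ((lX F)⁻¹ * part4 F z + (lX F)⁻¹ ^ 2 * part5 F z + part6 F z).coeff k = _
  simp only [HahnSeries.coeff_add, coeff_lX_inv_mul, coeff_lX_inv_pow_mul, part4, part5, part6,
    coeff_lpart, betaIndex, Equiv.coe_fn_mk, Int.odd_iff, Int.even_iff]
  split_ifs <;> first | omega | simp

def betaKInv (w : LaurentSeries F) : LaurentSeries F :=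
  lX F * lpart F (fun k => -1 ≤ k) w + lX F ^ 2 * lpart F (fun k => k < -1 ∧ Odd k) w +
    lpart F (fun k => k < 0 ∧ Even k) w

lemma coeff_betaKInv (w : LaurentSeries F) (k : ℤ) :
    (betaKInv w).coeff k = w.coeff (betaIndex.symm k) := by
  simp only [betaKInv, HahnSeries.coeff_add, coeff_lX_mul, coeff_lX_pow_mul, coeff_lpart,
    betaIndex, Equiv.coe_fn_symm_mk, Int.odd_iff, Int.even_iff]
  split_ifs <;> first | omega | simp

lemma betaK_bijective : Function.Bijective (betaK F) := by
  refine Function.bijective_iff_has_inverse.mpr ⟨betaKInv, fun z => ?_, fun w => ?_⟩ <;> ext k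
  · rw [coeff_betaKInv, coeff_betaK, Equiv.apply_symm_apply]
  · rw [coeff_betaK, coeff_betaKInv, Equiv.symm_apply_apply]

lemma betaK_single (k : ℤ) (c : F) :
    betaK F (HahnSeries.single k c) = HahnSeries.single (betaIndex.symm k) c := by
  ext j
  rw [coeff_betaK, HahnSeries.coeff_single, HahnSeries.coeff_single, Equiv.eq_symm_apply]

lemma betaK_of_mem_lO {z : LaurentSeries F} (hz : z ∈ lO F) : betaK F z = (lX F)⁻¹ * z := by
  have h4 : part4 F z = z := lpart_eq_self fun k hk => not_lt.mp fun hk' => hk (hz k hk')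
  have h5 : part5 F z = 0 := lpart_eq_zero fun k hk => hz k hk.1
  have h6 : part6 F z = 0 := lpart_eq_zero fun k hk => hz k hk.1
  change (lX F)⁻¹ * part4 F z + (lX F)⁻¹ ^ 2 * part5 F z + part6 F z = _
  rw [h4, h5, h6, mul_zero, add_zero, add_zero]

lemma map_betaK_lO : (lO F).map (betaK F) = Fline F 1 ⊔ lO F := by
  refine le_antisymm (fun w hw => ?_) (sup_le (fun w hw => ?_) fun z hz => ?_)
  · obtain ⟨z, hz, rfl⟩ := AddSubgroup.mem_map_end.mp hw
    rw [betaK_of_mem_lO hz,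
      ← add_sub_cancel (HahnSeries.single (-1) (z.coeff 0)) ((lX F)⁻¹ * z)]
    refine add_mem (AddSubgroup.mem_sup_left (mem_Fline.mpr ⟨z.coeff 0, by simp⟩))
      (AddSubgroup.mem_sup_right fun k hk => ?_)
    rw [HahnSeries.coeff_sub, coeff_lX_inv_mul, HahnSeries.coeff_single]
    split_ifs with hk_eq
    · rw [hk_eq, neg_add_cancel, sub_self]
    · rw [hz _ (by omega), sub_zero]
  · obtain ⟨c, rfl⟩ := mem_Fline.mp hw
    exact AddSubgroup.mem_map_end.mpr ⟨_, single_mem_lO le_rfl c, betaK_single 0 c⟩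
  · refine AddSubgroup.mem_map_end.mpr ⟨lX F * z, lX_mul_mem_lO hz, ?_⟩
    rw [betaK_of_mem_lO (lX_mul_mem_lO hz),
      inv_mul_cancel_left₀ (HahnSeries.single_ne_zero one_ne_zero)]

lemma betaIndex_symm_neg_odd (m : ℕ) :
    betaIndex.symm (-((2 * m + 1 : ℕ) : ℤ)) = -((2 * (m + 1) + 1 : ℕ) : ℤ) := by
  simp only [betaIndex, Equiv.coe_fn_symm_mk, Int.odd_iff]
  split_ifs <;> omega

lemma map_betaK_Fline {m m' : ℕ} (h : betaIndex.symm (-(m : ℤ)) = -(m' : ℤ)) :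
    (Fline F m).map (betaK F) = Fline F m' := by
  ext w
  simp only [AddSubgroup.mem_map_end, mem_Fline, exists_exists_eq_and, betaK_single, h]

lemma map_betaK_pow_Fline_one (n : ℕ) :
    (Fline F 1).map (betaK F ^ n) = Fline F (2 * n + 1) := by
  induction n with
  | zero => exact AddSubgroup.map_one_end _
  | succ n ih =>
    rw [pow_succ', AddSubgroup.map_mul_end, ih, map_betaK_Fline (betaIndex_symm_neg_odd n)]

theorem stmt12_general (F : Type*) [Field F] :
    Function.Bijective (betaK F) ∧
      (∀ z ∈ lO F, betaK F z = (lX F)⁻¹ * z) ∧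
      ∀ n : ℕ, (lO F).map ((betaK F) ^ n : AddMonoid.End _) =
        (⨆ k ∈ Finset.range n, Fline F (2 * k + 1)) ⊔ lO F := by
  refine ⟨betaK_bijective, fun z hz => betaK_of_mem_lO hz, fun n => ?_⟩
  induction n with
  | zero => simp [AddSubgroup.map_one_end]
  | succ n ih =>
    rw [pow_succ, AddSubgroup.map_mul_end, map_betaK_lO, AddSubgroup.map_sup _ _ (betaK F ^ n),
      map_betaK_pow_Fline_one, ih, Finset.range_add_one, Finset.iSup_insert, sup_assoc]

/-- Let `K := F((X))`, `O := F[[X]]` and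
`β(z) := X⁻¹z⁽⁴⁾ + X⁻²z⁽⁵⁾ + z⁽⁶⁾`.  Then `β` is an additive automorphism of
`K`, it agrees with multiplication by `X⁻¹` on `O`, and for each `n`,
`β^n(O) = Σ_{k=0}^{n-1} F·X^{-(2k+1)} + O`. -/
theorem stmt12 (F : Type*) [Field F] [Fintype F] :
    Function.Bijective (betaK F) ∧
      (∀ z ∈ lO F, betaK F z = (lX F)⁻¹ * z) ∧
      ∀ n : ℕ, (lO F).map ((betaK F) ^ n : AddMonoid.End _) =
        (⨆ k ∈ Finset.range n, Fline F (2 * k + 1)) ⊔ lO F :=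
  stmt12_general F

end
end

section
/- Let J be an infinite set, F a nontrivial finite group, G := F^J with the product topology, and π : Sym(J) → Aut(G) the permutation action π(σ)(f)(j) := f(σ⁻¹(j)). Let H ≤ Sym(J) be a subgroup all of whose orbits on J are infinite. If U ⊆ G is an open subgroup with π(σ)(U) = U for all σ ∈ H, then U = G. -/
/-! Being open, `U` contains every function that is trivial on some finite set `I`. Each
`j : J` has an `H`-translate `σ j` outside `I`, so the single `Pi.mulSingle (σ j) x` lies in `U`,
and translating back by `σ⁻¹ ∈ H` puts `Pi.mulSingle j x` in `U`. Any `f` is then the product of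
its restriction off `I` with a finite product of singles on `I`.
-/

theorem exists_finset_forall_mem_of_isOpen_pi {ι : Type*} {A : ι → Type*}
    [∀ i, TopologicalSpace (A i)] {s : Set (∀ i, A i)} (hs : IsOpen s) {g : ∀ i, A i}
    (hg : g ∈ s) : ∃ I : Finset ι, ∀ f, (∀ i ∈ I, f i = g i) → f ∈ s := by
  obtain ⟨I, u, hu, hIu⟩ := isOpen_pi_iff.mp hs g hg
  exact ⟨I, fun f hf => hIu fun i hi => hf i hi ▸ (hu i hi).2⟩

theorem Subgroup.eq_top_of_forall_eq_one_mem_of_mulSingle_mem {ι : Type*} [DecidableEq ι]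
    {G : ι → Type*} [∀ i, Group (G i)] (U : Subgroup (∀ i, G i)) (I : Finset ι)
    (hI : ∀ f, (∀ i ∈ I, f i = 1) → f ∈ U) (hsingle : ∀ i ∈ I, ∀ x, Pi.mulSingle i x ∈ U) :
    U = ⊤ := by
  refine (eq_top_iff' U).mpr fun f => ?_
  have hsplit : f = I.piecewise (1 : ∀ i, G i) f * I.piecewise f 1 := by
    funext i
    by_cases hi : i ∈ I <;> simp [hi]
  rw [hsplit]
  refine mul_mem (hI _ fun i hi => by simp [hi]) ?_
  exact Submonoid.pi_mem_of_mulSingle_mem_aux I _ (fun i hi => by simp [hi])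
    fun i hi => hsingle i hi _

theorem mulSingle_mem_of_perm_image_subset {J F : Type*} [DecidableEq J] [One F]
    {U : Set (J → F)} {σ : Equiv.Perm J}
    (hσ : (fun f : J → F => fun j => f (σ⁻¹ j)) '' U ⊆ U) {k : J} {x : F}
    (hk : Pi.mulSingle k x ∈ U) : Pi.mulSingle (σ k) x ∈ U := by
  have hcomp : (fun j => (Pi.mulSingle k x : J → F) (σ⁻¹ j)) = Pi.mulSingle (σ k) x :=
    (Pi.mulSingle_comp_equiv σ⁻¹ k x).trans (by simp [Equiv.Perm.inv_def])
  exact hcomp ▸ hσ ⟨_, hk, rfl⟩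

theorem stmt14_general (J : Type*) (F : Type*) [Group F] [TopologicalSpace F]
    (H : Subgroup (Equiv.Perm J))
    (horb : ∀ k : J, {j : J | ∃ σ ∈ H, σ k = j}.Infinite)
    (U : Subgroup (J → F)) (hUopen : IsOpen (U : Set (J → F)))
    (hUinv : ∀ σ ∈ H, (fun f : J → F => fun j => f (σ⁻¹ j)) '' U = U) :
    U = ⊤ := by
  classical
  obtain ⟨I, hI⟩ := exists_finset_forall_mem_of_isOpen_pi hUopen U.one_mem
  refine U.eq_top_of_forall_eq_one_mem_of_mulSingle_mem I hI fun j _ x => ?_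
  obtain ⟨_, ⟨σ, hσ, rfl⟩, hσj⟩ := ((horb j).sdiff I.finite_toSet).nonempty
  have hfar : Pi.mulSingle (σ j) x ∈ U :=
    hI _ fun i hi => by simp [ne_of_mem_of_not_mem hi hσj]
  simpa using mulSingle_mem_of_perm_image_subset (hUinv σ⁻¹ (H.inv_mem hσ)).subset hfar

/-- Let `J` be an infinite set, `F` a nontrivial finite group,
`G := F^J` with the product topology, and `π : Sym(J) → Aut(G)` the permutation
action `π(σ)(f)(j) := f(σ⁻¹(j))`.  Let `H ≤ Sym(J)` be a subgroup all of whose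
orbits on `J` are infinite.  If `U ⊆ G` is an open subgroup with
`π(σ)(U) = U` for all `σ ∈ H`, then `U = G`. -/
theorem stmt14 (J : Type*) [Infinite J] (F : Type*) [Group F] [Finite F]
    [Nontrivial F] [TopologicalSpace F] [DiscreteTopology F]
    (H : Subgroup (Equiv.Perm J))
    (horb : ∀ k : J, {j : J | ∃ σ ∈ H, σ k = j}.Infinite)
    (U : Subgroup (J → F)) (hUopen : IsOpen (U : Set (J → F)))
    (hUinv : ∀ σ ∈ H, (fun f : J → F => fun j => f (σ⁻¹ j)) '' U = U) :
    U = ⊤ :=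
  stmt14_general J F H horb U hUopen hUinv
end
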